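/- arXiv:1506.03855 — 4 statements merged into one kernel-verified Lean document; each statement's English description precedes it below -/
import Mathlib

section
/- The polar map recurrence for ẋ = x^{k+1} in ℝ has the conserved decreasing quantity I_n = 1/(x_n···x_{n+k-1}): if x_{n+k} = x_n + h·k·x_n·x_{n+1}···x_{n+k} with all x_j nonzero, then 1/(x_n···x_{n+k-1}) = 1/(x_{n+1}···x_{n+k}) + h·k. -/
/-- conserved quantity identity for the polar map recurrence of
`ẋ = x^{k+1}`. -/
theorem polar_map_power_invariant (k : ℕ) (hk : 0 < k) (h : ℝ) (hh : 0 < h)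
    (x : ℕ → ℝ) (hx : ∀ n, x n ≠ 0)
    (hrec : ∀ n, x (n + k) = x n + h * k * ∏ j ∈ Finset.range (k + 1), x (n + j)) :
    ∀ n, (∏ j ∈ Finset.range k, x (n + j))⁻¹ =
      (∏ j ∈ Finset.range k, x (n + 1 + j))⁻¹ + h * k := by
  intro n
  set P : ℝ := ∏ j ∈ Finset.range k, x (n + j) with hPdef
  set Q : ℝ := ∏ j ∈ Finset.range k, x (n + 1 + j) with hQdef
  have hP : P ≠ 0 := Finset.prod_ne_zero_iff.2 fun j _ => hx _
  have hQ : Q ≠ 0 := Finset.prod_ne_zero_iff.2 fun j _ => hx _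
  have e1 : ∏ j ∈ Finset.range (k + 1), x (n + j) = x n * Q := by
    have this : ∀ j ∈ Finset.range k, x (n + (j + 1)) = x (n + 1 + j) := by
      intro j _; congr 1; omega
    rw [Finset.prod_range_succ', Finset.prod_congr rfl this, ← hQdef, Nat.add_zero,
      mul_comm]
  have e2 : ∏ j ∈ Finset.range (k + 1), x (n + j) = P * x (n + k) :=
    Finset.prod_range_succ _ _
  have hM : x n * Q = P * x (n + k) := by rw [← e1, e2]
  have key : Q = P + h * k * (P * Q) := by
    apply mul_left_cancel₀ (hx n)
    rw [hM, hrec n, e1]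
    ring
  field_simp
  linear_combination key
end

section
/- For the polar map recurrence of ẋ = x^{k+1}, the quantity I_n := 1/(x_n x_{n+1}···x_{n+k-1}) satisfies I_n = I_0 - n·h·k for all n ≥ 0. -/
/-- `I_n = I_0 - n h k` for the polar map recurrence of `ẋ = x^{k+1}`. -/
theorem polar_map_power_integral (k : ℕ) (hk : 0 < k) (h : ℝ)
    (x : ℕ → ℝ) (hx : ∀ n, x n ≠ 0)
    (hrec : ∀ n, x (n + k) = x n + h * k * ∏ j ∈ Finset.range (k + 1), x (n + j))
    (I : ℕ → ℝ) (hI : ∀ n, I n = (∏ j ∈ Finset.range k, x (n + j))⁻¹) :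
    ∀ n : ℕ, I n = I 0 - n * h * k := by
  have key : ∀ n, I (n + 1) = I n - h * k := by
    intro n
    set A := ∏ j ∈ Finset.range k, x (n + j) with hAdef
    set B := ∏ j ∈ Finset.range k, x (n + 1 + j) with hBdef
    have hA : A ≠ 0 := Finset.prod_ne_zero_iff.mpr fun j _ => hx _
    have hB : B ≠ 0 := Finset.prod_ne_zero_iff.mpr fun j _ => hx _
    have hP1 : ∏ j ∈ Finset.range (k + 1), x (n + j) = A * x (n + k) :=
      Finset.prod_range_succ _ _
    have hP2 : ∏ j ∈ Finset.range (k + 1), x (n + j) = B * x n := by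
      rw [Finset.prod_range_succ']
      congr 1
      · apply Finset.prod_congr rfl
        intro j _
        rw [show n + (j + 1) = n + 1 + j by omega]
    have hr := hrec n
    rw [hP2] at hr
    have eq1 : A * x (n + k) = B * x n := by rw [← hP1, hP2]
    rw [hr] at eq1
    have eq2 : A + h * k * A * B = B := by
      have hxn := hx n
      apply mul_right_cancel₀ hxn
      ring_nf
      ring_nf at eq1
      linarith [eq1]
    rw [hI, hI, ← hAdef, ← hBdef]
    field_simp
    linear_combination eq2
  intro n
  induction n with
  | zero => simp
  | succ m ih =>
    rw [key m, ih]
    push_cast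
    ring
end

section
/- The symplectic area ω(x₀,x₁) is a k-integral of the polar map: if (x_{k} - x₀) = a·K·𝖧(x₀,...,x_k,·) and (x_{k+1} - x₁) = a·K·𝖧(x₁,...,x_{k+1},·) where K = Ω⁻¹, a = kh/(k+1)!, and ω(u,v) = uᵀΩv, then ω(x₀,x₁) = ω(x_k,x_{k+1}). -/
open Matrix

/-- `ω(x₀,x₁)` is a k-integral of the polar map of a homogeneous
Hamiltonian system: `ω(x₀,x₁) = ω(x_k,x_{k+1})`. -/
theorem polar_map_k_integral (n k : ℕ) (hk : 0 < k) (h : ℝ)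
    (Ω : Matrix (Fin n) (Fin n) ℝ) (hΩinv : IsUnit Ω.det) (hΩanti : Ωᵀ = -Ω)
    (K : Matrix (Fin n) (Fin n) ℝ) (hK : K = Ω⁻¹)
    (Ht : MultilinearMap ℝ (fun _ : Fin (k + 2) => (Fin n → ℝ)) ℝ)
    (hsymm : ∀ (σ : Equiv.Perm (Fin (k + 2))) (x : Fin (k + 2) → (Fin n → ℝ)),
      Ht (x ∘ σ) = Ht x)
    (a : ℝ) (ha : a = k * h / ((k + 1).factorial : ℝ))
    (x : ℕ → (Fin n → ℝ))
    (heq₀ : x k - x 0 =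
      a • K.mulVec (fun i => Ht (Fin.snoc (fun j : Fin (k + 1) => x j) (Pi.single i 1))))
    (heq₁ : x (k + 1) - x 1 =
      a • K.mulVec (fun i => Ht (Fin.snoc (fun j : Fin (k + 1) => x (j + 1)) (Pi.single i 1)))) :
    x 0 ⬝ᵥ Ω.mulVec (x 1) = x k ⬝ᵥ Ω.mulVec (x (k + 1)) := by
  set v₀ : Fin n → ℝ := fun i => Ht (Fin.snoc (fun j : Fin (k + 1) => x j) (Pi.single i 1))
    with hv₀
  set v₁ : Fin n → ℝ := fun i => Ht (Fin.snoc (fun j : Fin (k + 1) => x (j + 1)) (Pi.single i 1))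
    with hv₁
  have hx₀ : x k = x 0 + a • K.mulVec v₀ := by
    rw [← heq₀]; abel
  have hx₁ : x (k + 1) = x 1 + a • K.mulVec v₁ := by
    rw [← heq₁]; abel
  -- matrix identities
  have hΩK : Ω * K = 1 := by rw [hK]; exact Matrix.mul_nonsing_inv Ω hΩinv
  have hKT : Kᵀ = -K := by
    rw [hK, Matrix.transpose_nonsing_inv, hΩanti]
    refine Matrix.inv_eq_left_inv ?_
    rw [neg_mul_neg]
    exact Matrix.nonsing_inv_mul Ω hΩinv
  have hKΩ : Kᵀ * Ω = -1 := by
    rw [hKT, neg_mul, hK, Matrix.nonsing_inv_mul Ω hΩinv]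
  -- key dot-product identity
  have key : ∀ v w : Fin n → ℝ,
      (K.mulVec v) ⬝ᵥ (Ω.mulVec w) = -(v ⬝ᵥ w) := by
    intro v w
    rw [dotProduct_comm, Matrix.dotProduct_mulVec, ← Matrix.mulVec_transpose,
      Matrix.mulVec_mulVec, hKΩ, Matrix.neg_mulVec, Matrix.one_mulVec, neg_dotProduct,
      dotProduct_comm]
  have keyΩ : ∀ v w : Fin n → ℝ, v ⬝ᵥ Ω.mulVec (K.mulVec w) = v ⬝ᵥ w := by
    intro v w
    rw [Matrix.mulVec_mulVec, hΩK, Matrix.one_mulVec]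
  -- multilinearity: evaluating Ht on a snoc as a dot product
  have snoc_lin : ∀ (f : Fin (k + 1) → (Fin n → ℝ)) (w : Fin n → ℝ),
      Ht (Fin.snoc f w) = w ⬝ᵥ (fun i => Ht (Fin.snoc f (Pi.single i 1))) := by
    intro f w
    have hL : ∀ z : Fin n → ℝ,
        Ht.toLinearMap (Fin.snoc f 0) (Fin.last (k + 1)) z = Ht (Fin.snoc f z) := by
      intro z
      rw [MultilinearMap.toLinearMap_apply, Fin.update_snoc_last]
    have hsingle : ∀ i : Fin n, (fun j => if i = j then 1 else 0 : Fin n → ℝ) = Pi.single i 1 :=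
      fun i => funext fun j => by simp [Pi.single_apply, eq_comm]
    have := LinearMap.pi_apply_eq_sum_univ (Ht.toLinearMap (Fin.snoc f 0) (Fin.last (k + 1))) w
    simp only [hsingle, hL] at this
    rw [this, dotProduct]
    exact Finset.sum_congr rfl fun i _ => by rw [smul_eq_mul]
  -- symmetry: snoc = cons up to rotation
  have snoc_cons : ∀ (f : Fin (k + 1) → (Fin n → ℝ)) (w : Fin n → ℝ),
      Ht (Fin.snoc f w) = Ht (Fin.cons w f) := by
    intro f w
    rw [Fin.snoc_eq_cons_rotate]
    exact hsymm (finRotate (k + 2)) (Fin.cons w f)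
  -- the shifted inner tuple
  have inner_eq : (Fin.snoc (fun j : Fin k => x (j + 1)) (x (k + 1)) : Fin (k+1) → (Fin n → ℝ))
      = fun j : Fin (k + 1) => x (j + 1) := by
    funext j
    refine Fin.lastCases ?_ (fun m => ?_) j
    · simp
    · simp [Fin.snoc_castSucc]
  have cons_eq : (Fin.cons (x 0) (fun j : Fin k => x (j + 1)) : Fin (k+1) → (Fin n → ℝ))
      = fun j : Fin (k + 1) => x j := by
    funext j
    refine Fin.cases ?_ (fun m => ?_) j
    · simp
    · simp
  -- T y := (x₁,…,x_k, y, x₀); symmetric rearrangement to S y := (x₀,…,x_k, y)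
  have Tsym : ∀ y : Fin n → ℝ,
      Ht (Fin.snoc (Fin.snoc (fun j : Fin k => x (j + 1)) y) (x 0))
        = Ht (Fin.snoc (fun j : Fin (k + 1) => x j) y) := by
    intro y
    rw [snoc_cons, Fin.cons_snoc_eq_snoc_cons, cons_eq]
  -- expansion of Ht(x₁,…,x_{k+1}, x₀)
  have E4 : Ht (Fin.snoc (fun j : Fin (k + 1) => x (j + 1)) (x 0))
      = Ht (Fin.snoc (fun j : Fin (k + 1) => x j) (x 1))
        + a * Ht (Fin.snoc (fun j : Fin (k + 1) => x j) (K.mulVec v₁)) := by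
    have h1 : Ht (Fin.snoc (fun j : Fin (k + 1) => x (j + 1)) (x 0))
        = Ht (Fin.snoc (Fin.snoc (fun j : Fin k => x (j + 1)) (x (k + 1))) (x 0)) := by
      rw [inner_eq]
    rw [h1, hx₁]
    have hupd : ∀ y : Fin n → ℝ,
        (Fin.snoc (Fin.snoc (fun j : Fin k => x (j + 1)) y) (x 0) : Fin (k+2) → (Fin n → ℝ))
          = Function.update (Fin.snoc (Fin.snoc (fun j : Fin k => x (j + 1)) 0) (x 0))
              ((Fin.last k).castSucc) y := by
      intro y
      rw [← Fin.snoc_update, Fin.update_snoc_last]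
    rw [hupd (x 1 + a • K.mulVec v₁), MultilinearMap.map_update_add, MultilinearMap.map_update_smul,
      ← hupd (x 1), ← hupd (K.mulVec v₁), Tsym, Tsym, smul_eq_mul]
  -- dot-product forms
  have E1 : x 0 ⬝ᵥ v₁ = Ht (Fin.snoc (fun j : Fin (k + 1) => x (j + 1)) (x 0)) := by
    rw [snoc_lin]
  have E2 : v₀ ⬝ᵥ x 1 = Ht (Fin.snoc (fun j : Fin (k + 1) => x j) (x 1)) := by
    rw [snoc_lin, dotProduct_comm]
  have E3 : v₀ ⬝ᵥ K.mulVec v₁ = Ht (Fin.snoc (fun j : Fin (k + 1) => x j) (K.mulVec v₁)) := by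
    rw [snoc_lin, dotProduct_comm]
  -- final computation
  rw [hx₀, hx₁]
  rw [Matrix.mulVec_add, Matrix.mulVec_smul, dotProduct_add, add_dotProduct,
    add_dotProduct, dotProduct_smul, dotProduct_smul, smul_dotProduct, smul_dotProduct,
    keyΩ, key, smul_eq_mul, smul_eq_mul, smul_eq_mul, smul_eq_mul]
  have key2 : (K.mulVec v₀) ⬝ᵥ (Ω.mulVec (K.mulVec v₁)) = -(v₀ ⬝ᵥ K.mulVec v₁) := key _ _
  rw [key2, E1, E4, ← E2, ← E3]
  ring
end

section
/- Scaling equivariance of the polar map: if x_k solves (x_k - x₀)/(kh) = (1/(k+1)!)·K·𝖧(x₀,...,x_k,·) and λ₀,...,λ_{k-1} are nonzero scalars with λ₀λ₁···λ_{k-1} = 1, then λ₀x_k solves the same equation with data (λ₀x₀, λ₁x₁, ..., λ_{k-1}x_{k-1}). -/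
open Matrix

theorem MultilinearMap.map_snoc_smul {R M N : Type*} [CommSemiring R] [AddCommMonoid M]
    [AddCommMonoid N] [Module R M] [Module R N] {m : ℕ}
    (f : MultilinearMap R (fun _ : Fin (m + 1) => M) N) (c : Fin m → R) (x : Fin m → M)
    (v : M) :
    f (Fin.snoc (fun j => c j • x j) v) = (∏ j, c j) • f (Fin.snoc x v) := by
  have hsnoc : (Fin.snoc (fun j => c j • x j) v : Fin (m + 1) → M) =
      fun j => (Fin.snoc c 1 : Fin (m + 1) → R) j • (Fin.snoc x v : Fin (m + 1) → M) j := by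
    funext j
    refine Fin.lastCases ?_ (fun i => ?_) j <;> simp
  rw [hsnoc, f.map_smul_univ, Fin.prod_snoc, mul_one]

/-- The polar map equation `(x_k - x₀)/(kh) = (1/(k+1)!) K 𝖧(x₀, …, x_k, ·)`, with the
linear form `𝖧(x₀, …, x_k, ·)` represented by its coordinate vector. -/
def IsPolarMapSolution {n k : ℕ} (h : ℝ)
    (Ht : MultilinearMap ℝ (fun _ : Fin (k + 2) => (Fin n → ℝ)) ℝ)
    (K : Matrix (Fin n) (Fin n) ℝ) (x : Fin (k + 1) → (Fin n → ℝ)) : Prop :=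
  x (Fin.last k) - x 0 = ((k : ℝ) * h / ((k + 1).factorial : ℝ)) •
    K.mulVec (fun i => Ht (Fin.snoc x (Pi.single i 1)))

/-- Both sides of the polar map equation are homogeneous: the left side of degree `c₀ = c_k`,
the right side of degree `∏ c`. -/
theorem IsPolarMapSolution.smul {n k : ℕ} {h : ℝ}
    {Ht : MultilinearMap ℝ (fun _ : Fin (k + 2) => (Fin n → ℝ)) ℝ}
    {K : Matrix (Fin n) (Fin n) ℝ} {x : Fin (k + 1) → (Fin n → ℝ)}
    (hx : IsPolarMapSolution h Ht K x) {c : Fin (k + 1) → ℝ}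
    (hc₀ : c 0 = ∏ j, c j) (hcₖ : c (Fin.last k) = ∏ j, c j) :
    IsPolarMapSolution h Ht K (fun j => c j • x j) := by
  have hrhs : (fun i => Ht (Fin.snoc (fun j => c j • x j) (Pi.single i 1))) =
      (∏ j, c j) • fun i => Ht (Fin.snoc x (Pi.single i 1)) := by
    funext i
    exact Ht.map_snoc_smul c x _
  unfold IsPolarMapSolution at hx ⊢
  beta_reduce
  rw [hrhs, hc₀, hcₖ, ← smul_sub, hx, mulVec_smul, smul_comm]

theorem polar_map_scaling_equivariance_general (n k : ℕ) (hk : 1 ≤ k) (h : ℝ)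
    (Ht : MultilinearMap ℝ (fun _ : Fin (k + 2) => (Fin n → ℝ)) ℝ)
    (K : Matrix (Fin n) (Fin n) ℝ)
    (x : Fin (k + 1) → (Fin n → ℝ))
    (heq : x (Fin.last k) - x 0 = ((k : ℝ) * h / ((k + 1).factorial : ℝ)) •
      K.mulVec (fun i => Ht (Fin.snoc x (Pi.single i 1))))
    (lam : Fin k → ℝ)
    (hlam : ∏ m, lam m = 1)
    (x' : Fin (k + 1) → (Fin n → ℝ))
    (hx' : ∀ j : Fin (k + 1), x' j =
      if hj : (j : ℕ) < k then lam ⟨j, hj⟩ • x j else lam ⟨0, hk⟩ • x j) :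
    x' (Fin.last k) - x' 0 = ((k : ℝ) * h / ((k + 1).factorial : ℝ)) •
      K.mulVec (fun i => Ht (Fin.snoc x' (Pi.single i 1))) := by
  set c : Fin (k + 1) → ℝ := Fin.snoc lam (lam ⟨0, hk⟩)
  -- `Fin.snoc` unfolds definitionally to the `dite` in `hx'`.
  have hx'c : x' = fun j => c j • x j := funext fun j => by rw [hx', ← dite_smul]; rfl
  have hprod : ∏ j, c j = lam ⟨0, hk⟩ := by rw [Fin.prod_snoc, hlam, one_mul]
  subst hx'c
  exact IsPolarMapSolution.smul heq (hprod ▸ Fin.snoc_castSucc (i := ⟨0, hk⟩) ..)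
    (hprod ▸ Fin.snoc_last ..)

/-- scaling equivariance of the polar map: if `x_k` solves the polar
map equation and `λ₀⋯λ_{k-1} = 1`, then `λ₀ x_k` solves the equation with scaled
data `(λ₀x₀, …, λ_{k-1}x_{k-1})`. -/
theorem polar_map_scaling_equivariance (n k : ℕ) (hk : 1 ≤ k) (h : ℝ)
    (Ht : MultilinearMap ℝ (fun _ : Fin (k + 2) => (Fin n → ℝ)) ℝ)
    (hsymm : ∀ (σ : Equiv.Perm (Fin (k + 2))) (y : Fin (k + 2) → (Fin n → ℝ)),
      Ht (y ∘ σ) = Ht y)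
    (K : Matrix (Fin n) (Fin n) ℝ) (hK : Matrix.transpose K = -K)
    (x : Fin (k + 1) → (Fin n → ℝ))
    (heq : x (Fin.last k) - x 0 = ((k : ℝ) * h / ((k + 1).factorial : ℝ)) •
      K.mulVec (fun i => Ht (Fin.snoc x (Pi.single i 1))))
    (lam : Fin k → ℝ) (hlamne : ∀ m, lam m ≠ 0)
    (hlam : ∏ m, lam m = 1)
    (x' : Fin (k + 1) → (Fin n → ℝ))
    (hx' : ∀ j : Fin (k + 1), x' j =
      if hj : (j : ℕ) < k then lam ⟨j, hj⟩ • x j else lam ⟨0, hk⟩ • x j) :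
    x' (Fin.last k) - x' 0 = ((k : ℝ) * h / ((k + 1).factorial : ℝ)) •
      K.mulVec (fun i => Ht (Fin.snoc x' (Pi.single i 1))) :=
  polar_map_scaling_equivariance_general n k hk h Ht K x heq lam hlam x' hx'
end
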